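/- Along a sequence p_n → 1⁺, if u_n are positive solutions of (−Δ)^s u + λ u = u^{p_n} in Ω (with zero exterior data) and M_n := ‖u_n‖_∞ is bounded along the sequence (M_n^{p_n−1}) with M_n^{p_n−1} → μ, and u_n/M_n → z uniformly with z not identically zero, z ≥ 0, z = 0 outside Ω, and z weakly solving (−Δ)^s z = (−λ + μ) z in Ω, then μ = λ₁^s(Ω) + λ and z is the first Dirichlet eigenfunction φ₁^s (normalized with sup = 1). -/

import Mathlib

open MeasureTheory Real Set Filter Topology

noncomputable def fracC (N : ℕ) (s : ℝ) : ℝ :=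
  4 ^ s * Real.pi ^ (-(N : ℝ) / 2) * Real.Gamma ((N : ℝ) / 2 + s) / Real.Gamma (2 - s)
    * (s * (1 - s))

/-- The Gagliardo bilinear form `(c_{N,s}/2) ∬ (u(x)−u(y))(v(x)−v(y))/|x−y|^{N+2s}`. -/
noncomputable def fracForm (N : ℕ) (s : ℝ)
    (u v : EuclideanSpace ℝ (Fin N) → ℝ) : ℝ :=
  fracC N s / 2 *
    ∫ x : EuclideanSpace ℝ (Fin N), ∫ y : EuclideanSpace ℝ (Fin N),
      (u x - u y) * (v x - v y) / ‖x - y‖ ^ ((N : ℝ) + 2 * s)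

/-!
Simplicity of the principal eigenvalue, applied to the nonnegative nontrivial eigenfunction `z`
with eigenvalue `μ - λ`, gives `μ - λ = λ₁` and `z = c φ₁` for some `c > 0`. The normalisation
fixes `c`: every `u_n / M_n` has supremum `1`, suprema pass to uniform limits, so
`c = c ⨆ φ₁ = ⨆ z = 1`.
-/

section RealSupremum

variable {α ι : Type*} {f g : α → ℝ} {ε : ℝ}

lemma bddAbove_range_of_forall_dist_le (hf : BddAbove (range f))
    (h : ∀ x, dist (f x) (g x) ≤ ε) : BddAbove (range g) := by
  obtain ⟨b, hb⟩ := hf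
  refine ⟨b + ε, forall_mem_range.2 fun x => ?_⟩
  have hfx := hb (mem_range_self x)
  have hgx := (abs_sub_le_iff.1 (h x)).2
  linarith

lemma dist_ciSup_le_of_forall_dist_le [Nonempty α] (hf : BddAbove (range f))
    (hg : BddAbove (range g)) (h : ∀ x, dist (f x) (g x) ≤ ε) :
    dist (⨆ x, f x) (⨆ x, g x) ≤ ε := by
  rw [Real.dist_eq, abs_sub_le_iff, sub_le_iff_le_add, sub_le_iff_le_add]
  exact ⟨ciSup_le fun x => by linarith [(abs_sub_le_iff.1 (h x)).1, le_ciSup hg x],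
    ciSup_le fun x => by linarith [(abs_sub_le_iff.1 (h x)).2, le_ciSup hf x]⟩

lemma Real.bddAbove_range_of_iSup_ne_zero (hf : ⨆ x, f x ≠ 0) :
    BddAbove (range f) :=
  not_not.1 fun h => hf (Real.iSup_of_not_bddAbove h)

lemma Real.iSup_div_iSup_self (hf : 0 < ⨆ x, f x) :
    ⨆ x, f x / ⨆ y, f y = 1 := by
  simp_rw [div_eq_mul_inv]
  rw [← Real.iSup_mul_of_nonneg (inv_nonneg.2 hf.le), mul_inv_cancel₀ hf.ne']

variable {F : ι → α → ℝ} {l : Filter ι} [l.NeBot]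

lemma TendstoUniformly.bddAbove_range (h : TendstoUniformly F f l)
    (hF : ∀ i, BddAbove (range (F i))) : BddAbove (range f) := by
  obtain ⟨i, hi⟩ := (Metric.tendstoUniformly_iff.1 h 1 one_pos).exists
  exact bddAbove_range_of_forall_dist_le (hF i) fun x => by rw [dist_comm]; exact (hi x).le

lemma TendstoUniformly.tendsto_ciSup [Nonempty α] (h : TendstoUniformly F f l)
    (hF : ∀ i, BddAbove (range (F i))) :
    Tendsto (fun i => ⨆ x, F i x) l (𝓝 (⨆ x, f x)) := by
  refine Metric.tendsto_nhds.2 fun ε hε => ?_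
  filter_upwards [Metric.tendstoUniformly_iff.1 h (ε / 2) (half_pos hε)] with i hi
  calc dist (⨆ x, F i x) (⨆ x, f x)
      ≤ ε / 2 := dist_ciSup_le_of_forall_dist_le (hF i) (h.bddAbove_range hF)
        fun x => by rw [dist_comm]; exact (hi x).le
    _ < ε := half_lt_self hε

end RealSupremum

theorem limit_is_first_eigenfunction_general (N : ℕ) (s lam lam1 μ : ℝ)
    (Ω : Set (EuclideanSpace ℝ (Fin N)))
    -- the first Dirichlet eigenpair (λ₁^s(Ω), φ₁^s), sup-normalized
    (φ₁ : EuclideanSpace ℝ (Fin N) → ℝ)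
    (hφsup : (⨆ x, φ₁ x) = 1)
    -- simplicity: λ₁ is the only eigenvalue with a nonnegative nontrivial eigenfunction
    (hsimple : ∀ (ν : ℝ) (ζ : EuclideanSpace ℝ (Fin N) → ℝ),
      (∀ x, 0 ≤ ζ x) → (∃ x ∈ Ω, ζ x ≠ 0) → (∀ x ∉ Ω, ζ x = 0) →
      (∀ ψ : EuclideanSpace ℝ (Fin N) → ℝ, (∀ x ∉ Ω, ψ x = 0) →
        fracForm N s ζ ψ = ν * ∫ x in Ω, ζ x * ψ x) →
      ν = lam1 ∧ ∃ c : ℝ, 0 < c ∧ ∀ x, ζ x = c * φ₁ x)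
    -- the sequence of solutions
    (u_n : ℕ → EuclideanSpace ℝ (Fin N) → ℝ)
    (M : ℕ → ℝ) (hM : ∀ n, M n = ⨆ x, u_n n x) (hMpos : ∀ n, 0 < M n)
    -- the limit profile z
    (z : EuclideanSpace ℝ (Fin N) → ℝ)
    (hzconv : TendstoUniformly (fun n x => u_n n x / M n) z atTop)
    (hznn : ∀ x, 0 ≤ z x) (hzne : ∃ x ∈ Ω, z x ≠ 0) (hz0 : ∀ x ∉ Ω, z x = 0)
    (hzsol : ∀ ψ : EuclideanSpace ℝ (Fin N) → ℝ, (∀ x ∉ Ω, ψ x = 0) →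
      fracForm N s z ψ = (-lam + μ) * ∫ x in Ω, z x * ψ x) :
    μ = lam1 + lam ∧ ∀ x, z x = φ₁ x := by
  obtain ⟨hν, c, hc, hz⟩ := hsimple (-lam + μ) z hznn hzne hz0 hzsol
  have hsup_n n : ⨆ x, u_n n x / M n = 1 := by
    rw [hM n]; exact Real.iSup_div_iSup_self (hM n ▸ hMpos n)
  have hsup_z : ⨆ x, z x = 1 :=
    tendsto_nhds_unique (hzconv.tendsto_ciSup fun n =>
      Real.bddAbove_range_of_iSup_ne_zero (by rw [hsup_n n]; exact one_ne_zero))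
      (by simp only [hsup_n, tendsto_const_nhds])
  have hc1 : c = 1 := by
    rw [← hsup_z, funext hz, ← Real.mul_iSup_of_nonneg hc.le, hφsup, mul_one]
  exact ⟨by linarith, fun x => by rw [hz x, hc1, one_mul]⟩

/-- Along `p_n → 1⁺`: if `u_n` are positive solutions of `(−Δ)^s u + λu = u^{p_n}` in `Ω`
(zero exterior data), `M_n = ‖u_n‖_∞` with `M_n^{p_n−1} → μ`, and `u_n/M_n → z` uniformly
with `z ≥ 0`, `z ≢ 0`, `z = 0` outside `Ω`, `z` weakly solving `(−Δ)^s z = (−λ+μ) z` in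
`Ω`, then `μ = λ₁^s(Ω) + λ` and `z` is the (sup-normalized) first eigenfunction `φ₁^s`. -/
theorem limit_is_first_eigenfunction (N : ℕ) (hN : 1 ≤ N) (s lam lam1 μ : ℝ)
    (hs : s ∈ Ioo (0:ℝ) 1)
    (Ω : Set (EuclideanSpace ℝ (Fin N))) (hΩo : IsOpen Ω)
    (hΩb : Bornology.IsBounded Ω) (hΩne : Ω.Nonempty)
    (hlamrange : -lam1 < lam)
    -- the first Dirichlet eigenpair (λ₁^s(Ω), φ₁^s), sup-normalized
    (φ₁ : EuclideanSpace ℝ (Fin N) → ℝ)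
    (hφpos : ∀ x ∈ Ω, 0 < φ₁ x) (hφ0 : ∀ x ∉ Ω, φ₁ x = 0) (hφsup : (⨆ x, φ₁ x) = 1)
    (hφeig : ∀ ψ : EuclideanSpace ℝ (Fin N) → ℝ, (∀ x ∉ Ω, ψ x = 0) →
      fracForm N s φ₁ ψ = lam1 * ∫ x in Ω, φ₁ x * ψ x)
    -- simplicity: λ₁ is the only eigenvalue with a nonnegative nontrivial eigenfunction
    (hsimple : ∀ (ν : ℝ) (ζ : EuclideanSpace ℝ (Fin N) → ℝ),
      (∀ x, 0 ≤ ζ x) → (∃ x ∈ Ω, ζ x ≠ 0) → (∀ x ∉ Ω, ζ x = 0) →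
      (∀ ψ : EuclideanSpace ℝ (Fin N) → ℝ, (∀ x ∉ Ω, ψ x = 0) →
        fracForm N s ζ ψ = ν * ∫ x in Ω, ζ x * ψ x) →
      ν = lam1 ∧ ∃ c : ℝ, 0 < c ∧ ∀ x, ζ x = c * φ₁ x)
    -- the sequence of solutions
    (p : ℕ → ℝ) (hp : ∀ n, 1 < p n) (hp1 : Tendsto p atTop (𝓝 1))
    (u_n : ℕ → EuclideanSpace ℝ (Fin N) → ℝ)
    (hupos : ∀ n, ∀ x ∈ Ω, 0 < u_n n x) (hu0 : ∀ n, ∀ x ∉ Ω, u_n n x = 0)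
    (husol : ∀ n, ∀ ψ : EuclideanSpace ℝ (Fin N) → ℝ, (∀ x ∉ Ω, ψ x = 0) →
      fracForm N s (u_n n) ψ + lam * ∫ x in Ω, u_n n x * ψ x
        = ∫ x in Ω, u_n n x ^ p n * ψ x)
    (M : ℕ → ℝ) (hM : ∀ n, M n = ⨆ x, u_n n x) (hMpos : ∀ n, 0 < M n)
    (hμ : Tendsto (fun n => M n ^ (p n - 1)) atTop (𝓝 μ))
    -- the limit profile z
    (z : EuclideanSpace ℝ (Fin N) → ℝ)
    (hzconv : TendstoUniformly (fun n x => u_n n x / M n) z atTop)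
    (hznn : ∀ x, 0 ≤ z x) (hzne : ∃ x ∈ Ω, z x ≠ 0) (hz0 : ∀ x ∉ Ω, z x = 0)
    (hzsol : ∀ ψ : EuclideanSpace ℝ (Fin N) → ℝ, (∀ x ∉ Ω, ψ x = 0) →
      fracForm N s z ψ = (-lam + μ) * ∫ x in Ω, z x * ψ x) :
    μ = lam1 + lam ∧ ∀ x, z x = φ₁ x :=
  limit_is_first_eigenfunction_general N s lam lam1 μ Ω φ₁ hφsup hsimple u_n M hM hMpos z hzconv
    hznn hzne hz0 hzsol
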